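/- Let p be a prime, let g ≥ 1, and let c_1 < c_2 < ⋯ < c_g be integers with 1 ≤ c_1 and c_g < p. Suppose f_1, …, f_g ∈ ℚ[[q]] are p-integral power series such that for each i the coefficient of q^{c_i} in f_i equals 1, and the coefficient of q^n in f_i equals 0 for every n ≤ c_g with n ≠ c_i. Let D := det(θ^{j−1} f_i)_{1≤i,j≤g} and V := ∏_{1≤j<k≤g}(c_k − c_j). Then p does not divide V, and every coefficient of the normalized Wronskian (1/V)·D is a p-integral rational number; moreover (1/V)·D has coefficient 1 at q^{c_1+⋯+c_g} and vanishing coefficients below that exponent. -/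

import Mathlib

open Finset

/-- The operator `θ = q·d/dq` on formal power series: it multiplies the coefficient of
`q^n` by `n`. -/
noncomputable def thetaOp (f : PowerSeries ℚ) : PowerSeries ℚ :=
  PowerSeries.mk fun n => (n : ℚ) * PowerSeries.coeff n f

/-- A rational number is `p`-integral if `p` does not divide its denominator. -/
def pIntegral (p : ℕ) (r : ℚ) : Prop := ¬ (p : ℤ) ∣ r.den

lemma coeff_thetaOp_iterate (j n : ℕ) (f : PowerSeries ℚ) :
    PowerSeries.coeff n (thetaOp^[j] f) = (n : ℚ) ^ j * PowerSeries.coeff n f := by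
  induction j generalizing f with
  | zero => simp
  | succ j ih =>
    rw [Function.iterate_succ_apply, ih, thetaOp]
    simp only [PowerSeries.coeff_mk]
    ring

lemma pIntegral_iff {p : ℕ} (hp : p.Prime) (r : ℚ) :
    pIntegral p r ↔ padicNorm p r ≤ 1 := by
  haveI : Fact p.Prime := ⟨hp⟩
  constructor
  · intro h
    have h' : ¬ p ∣ r.den := by unfold pIntegral at h; exact_mod_cast h
    have := @Padic.norm_rat_le_one p _ r h'
    rw [Padic.eq_padicNorm] at this
    exact_mod_cast this
  · intro h hdvd
    have hd : p ∣ r.den := by exact_mod_cast hdvd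
    have hr0 : r ≠ 0 := by
      intro h0
      rw [h0] at hd
      simp at hd
      exact hp.one_lt.ne' hd
    have hnum : ¬ (p : ℤ) ∣ r.num := by
      intro hn
      have : p ∣ r.num.natAbs := by exact_mod_cast Int.natAbs_dvd_natAbs.mpr hn
      exact hp.one_lt.ne' (Nat.eq_one_of_dvd_coprimes r.reduced this hd)
    have h1 : padicNorm p (r.num : ℚ) = 1 := (padicNorm.int_eq_one_iff _).mpr hnum
    have h2 : padicNorm p (r.den : ℚ) < 1 := (padicNorm.nat_lt_one_iff _).mpr hd
    have h3 : (0:ℚ) < padicNorm p (r.den : ℚ) := by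
      apply lt_of_le_of_ne (padicNorm.nonneg _)
      intro h0
      exact (Nat.cast_ne_zero (R := ℚ)).mpr r.den_nz (padicNorm.zero_of_padicNorm_eq_zero h0.symm)
    have h4 : padicNorm p r = padicNorm p (r.num : ℚ) / padicNorm p (r.den : ℚ) := by
      rw [← padicNorm.div, Rat.num_div_den]
    rw [h4, h1] at h
    have h5 : (1:ℚ) ≤ padicNorm p (r.den : ℚ) := (div_le_one h3).mp h
    linarith

theorem normalized_wronskian_p_integral
    (p : ℕ) (hp : p.Prime) (g : ℕ) (hg : 1 ≤ g)
    (c : Fin g → ℕ) (hc : StrictMono c)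
    (hc1 : 1 ≤ c ⟨0, by omega⟩) (hcg : c ⟨g - 1, by omega⟩ < p)
    (f : Fin g → PowerSeries ℚ)
    (hint : ∀ i n, pIntegral p (PowerSeries.coeff n (f i)))
    (hdiag : ∀ i, PowerSeries.coeff (c i) (f i) = 1)
    (hoff : ∀ i, ∀ n ≤ c ⟨g - 1, by omega⟩, n ≠ c i → PowerSeries.coeff n (f i) = 0)
    (D : PowerSeries ℚ)
    (hD : D = Matrix.det (Matrix.of fun i j : Fin g => thetaOp^[(j : ℕ)] (f i)))
    (V : ℕ)
    (hV : V = ∏ k, ∏ j ∈ Finset.univ.filter (fun j => j < k), (c k - c j)) :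
    ¬ p ∣ V ∧
      (∀ n, pIntegral p (PowerSeries.coeff n ((V : ℚ)⁻¹ • D))) ∧
      PowerSeries.coeff (∑ i, c i) ((V : ℚ)⁻¹ • D) = 1 ∧
      (∀ n < ∑ i, c i, PowerSeries.coeff n ((V : ℚ)⁻¹ • D) = 0) := by
  haveI : Fact p.Prime := ⟨hp⟩
  have hgm : g - 1 < g := by omega
  set gm : Fin g := ⟨g - 1, hgm⟩ with hgmdef
  have hcg' : c gm < p := hcg
  have hle : ∀ i : Fin g, c i ≤ c gm := by
    intro i
    apply hc.monotone
    rw [Fin.le_def]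
    have := i.isLt
    simp only [gm]
    omega
  -- part 1 : p does not divide V
  have hPV : ¬ p ∣ V := by
    rw [hV]
    intro hdvd
    obtain ⟨k, -, hk⟩ := (Prime.dvd_finset_prod_iff hp.prime _).mp hdvd
    obtain ⟨j, hj, hk2⟩ := (Prime.dvd_finset_prod_iff hp.prime _).mp hk
    rw [Finset.mem_filter] at hj
    have hjk : c j < c k := hc hj.2
    have h2 := Nat.le_of_dvd (by omega) hk2
    have := hle k
    omega
  have hV0 : V ≠ 0 := fun h => hPV (h ▸ dvd_zero p)
  have hVQ0 : (V : ℚ) ≠ 0 := Nat.cast_ne_zero.mpr hV0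
  -- coefficient formula for D
  have hcoeff : ∀ n : ℕ, PowerSeries.coeff n D =
      ∑ σ : Equiv.Perm (Fin g), ((Equiv.Perm.sign σ : ℤ) : ℚ) *
        ∑ l ∈ Finset.finsuppAntidiag (Finset.univ : Finset (Fin g)) n,
          ∏ i, ((l i : ℚ) ^ (i : ℕ) * PowerSeries.coeff (l i) (f (σ i))) := by
    intro n
    rw [hD, Matrix.det_apply, map_sum]
    refine Finset.sum_congr rfl fun σ _ => ?_
    rw [Units.smul_def, map_zsmul, zsmul_eq_mul]
    congr 1
    rw [PowerSeries.coeff_prod]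
    refine Finset.sum_congr rfl fun l _ => ?_
    refine Finset.prod_congr rfl fun i _ => ?_
    simp only [Matrix.of_apply]
    exact coeff_thetaOp_iterate _ _ _
  -- key vanishing lemma
  have key : ∀ n, n ≤ ∑ i, c i → ∀ σ : Equiv.Perm (Fin g),
      ∀ l ∈ Finset.finsuppAntidiag (Finset.univ : Finset (Fin g)) n,
      (∏ i, ((l i : ℚ) ^ (i : ℕ) * PowerSeries.coeff (l i) (f (σ i)))) ≠ 0 →
      ∀ i, l i = c (σ i) := by
    intro n hn σ l hl hne
    rw [Finset.mem_finsuppAntidiag] at hl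
    have hsum : ∑ i, l i = n := hl.1
    have hfac : ∀ i : Fin g, PowerSeries.coeff (l i) (f (σ i)) ≠ 0 := by
      intro i h0
      exact hne (Finset.prod_eq_zero (Finset.mem_univ i) (by rw [h0, mul_zero]))
    have hge : ∀ i, c (σ i) ≤ l i := by
      intro i
      by_cases h : l i = c (σ i)
      · omega
      · have h2 : ¬ l i ≤ c gm := fun hle' => hfac i (hoff (σ i) _ hle' h)
        have := hle (σ i)
        omega
    by_contra hcon
    push_neg at hcon
    obtain ⟨i0, hi0⟩ := hcon
    have h1 : ∑ i, c (σ i) < ∑ i, l i :=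
      Finset.sum_lt_sum (fun i _ => hge i)
        ⟨i0, Finset.mem_univ i0, lt_of_le_of_ne (hge i0) (Ne.symm hi0)⟩
    have h2 : ∑ i, c (σ i) = ∑ i, c i := Equiv.sum_comp σ c
    omega
  -- low coefficients vanish
  have hlow : ∀ n < ∑ i, c i, PowerSeries.coeff n D = 0 := by
    intro n hn
    rw [hcoeff n]
    refine Finset.sum_eq_zero fun σ _ => ?_
    rw [mul_eq_zero]
    right
    refine Finset.sum_eq_zero fun l hl => ?_
    by_contra h0
    have h1 := key n hn.le σ l hl h0
    have h2 : ∑ i, l i = n := (Finset.mem_finsuppAntidiag.mp hl).1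
    have h3 : ∑ i, l i = ∑ i, c (σ i) := Finset.sum_congr rfl fun i _ => h1 i
    have h4 : ∑ i, c (σ i) = ∑ i, c i := Equiv.sum_comp σ c
    omega
  -- top coefficient is the Vandermonde determinant
  have hdet : PowerSeries.coeff (∑ i, c i) D =
      Matrix.det (Matrix.vandermonde fun i => (c i : ℚ)) := by
    rw [hcoeff, Matrix.det_apply]
    refine Finset.sum_congr rfl fun σ _ => ?_
    rw [Units.smul_def, zsmul_eq_mul]
    congr 1
    have hmem : (Finsupp.equivFunOnFinite.symm fun i => c (σ i)) ∈
        Finset.finsuppAntidiag (Finset.univ : Finset (Fin g)) (∑ i, c i) := by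
      rw [Finset.mem_finsuppAntidiag]
      refine ⟨?_, Finset.subset_univ _⟩
      simpa using Equiv.sum_comp σ c
    rw [Finset.sum_eq_single_of_mem _ hmem ?side]
    case side =>
      intro l hl hne
      by_contra h0
      apply hne
      have h1 := key _ le_rfl σ l hl h0
      ext i
      simp [h1 i]
    refine Finset.prod_congr rfl fun i _ => ?_
    simp [Matrix.vandermonde, hdiag (σ i)]
  -- the cast of V equals the Vandermonde determinant
  have hVQ : (V : ℚ) = Matrix.det (Matrix.vandermonde fun i => (c i : ℚ)) := by
    rw [Matrix.det_vandermonde]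
    have e1 : (V : ℚ) =
        ∏ k, ∏ j ∈ Finset.univ.filter (fun j => j < k), ((c k : ℚ) - (c j : ℚ)) := by
      rw [hV, Nat.cast_prod]
      refine Finset.prod_congr rfl fun k _ => ?_
      rw [Nat.cast_prod]
      refine Finset.prod_congr rfl fun j hj => ?_
      rw [Finset.mem_filter] at hj
      rw [Nat.cast_sub (hc hj.2).le]
    rw [e1]
    refine Finset.prod_comm' fun k j => ?_
    simp [Finset.mem_Ioi]
  -- p-adic norm bound on coefficients of D
  have hnormD : ∀ n, padicNorm p (PowerSeries.coeff n D) ≤ 1 := by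
    intro n
    rw [hcoeff n]
    refine padicNorm.sum_le Finset.univ_nonempty fun σ _ => ?_
    rw [padicNorm.mul]
    have h1 : padicNorm p ((Equiv.Perm.sign σ : ℤ) : ℚ) ≤ 1 := padicNorm.of_int _
    have h2 : padicNorm p
        (∑ l ∈ Finset.finsuppAntidiag (Finset.univ : Finset (Fin g)) n,
          ∏ i, ((l i : ℚ) ^ (i : ℕ) * PowerSeries.coeff (l i) (f (σ i)))) ≤ 1 := by
      rcases Finset.eq_empty_or_nonempty
          (Finset.finsuppAntidiag (Finset.univ : Finset (Fin g)) n) with he | hne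
      · rw [he, Finset.sum_empty, padicNorm.zero]
        norm_num
      · refine padicNorm.sum_le hne fun l _ => ?_
        refine Finset.prod_induction _ (fun x => padicNorm p x ≤ 1) ?_ ?_ ?_
        · intro a b ha hb
          rw [padicNorm.mul]
          have := padicNorm.nonneg (p := p) a
          have := padicNorm.nonneg (p := p) b
          nlinarith
        · simpa using padicNorm.one (p := p)
        · intro i _
          rw [padicNorm.mul]
          have h3 : padicNorm p ((l i : ℚ) ^ (i : ℕ)) ≤ 1 := by
            have he2 : ((l i : ℚ)) ^ (i : ℕ) = ((l i ^ (i : ℕ) : ℕ) : ℚ) := by push_cast; ring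
            rw [he2]
            exact padicNorm.of_nat _
          have h4 := (pIntegral_iff hp _).mp (hint (σ i) (l i))
          have := padicNorm.nonneg (p := p) ((l i : ℚ) ^ (i : ℕ))
          have := padicNorm.nonneg (p := p) (PowerSeries.coeff (l i) (f (σ i)))
          nlinarith
    have h0 := padicNorm.nonneg (p := p) ((Equiv.Perm.sign σ : ℤ) : ℚ)
    have h0' := padicNorm.nonneg (p := p)
        (∑ l ∈ Finset.finsuppAntidiag (Finset.univ : Finset (Fin g)) n,
          ∏ i, ((l i : ℚ) ^ (i : ℕ) * PowerSeries.coeff (l i) (f (σ i))))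
    nlinarith
  refine ⟨hPV, ?_, ?_, ?_⟩
  · intro n
    rw [pIntegral_iff hp, map_smul, smul_eq_mul, padicNorm.mul]
    have hinv : padicNorm p ((V : ℚ)⁻¹) = 1 := by
      have h1 : padicNorm p (V : ℚ) = 1 := (padicNorm.nat_eq_one_iff _).mpr hPV
      rw [← one_div, padicNorm.div, h1, padicNorm.one]
      norm_num
    rw [hinv, one_mul]
    exact hnormD n
  · rw [map_smul, smul_eq_mul, hdet, ← hVQ, inv_mul_cancel₀ hVQ0]
  · intro n hn
    rw [map_smul, smul_eq_mul, hlow n hn, mul_zero]
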